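/- arXiv:2605.26909 — 2 statements merged into one kernel-verified Lean document; each statement's English description precedes it below -/
import Mathlib

section
/- Under the standing hypotheses, the sequence of reference values {R_k} is monotonically decreasing, one has φ(x^k) ≤ R_k ≤ R_0 = φ(x⁰) for all k, and both {R_k} and {φ(x^k)} converge to one and the same finite limit φ* ∈ ℝ. -/
open Set Filter Topology

noncomputable section

variable {E : Type*} [NormedAddCommGroup E] [InnerProductSpace ℝ E] [FiniteDimensional ℝ E]

open Classical in
/-- The indicator function of a set `M` (`0` on `M`, `+∞` elsewhere), with values in `EReal`. -/
def indicatorFun (M : Set E) (x : E) : EReal := if x ∈ M then 0 else ⊤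

/-- The Fréchet (regular) subdifferential of an extended-real-valued function `g` at `x`. -/
def frechetSubdiff (g : E → EReal) (x : E) : Set E :=
  {v | ∀ ε : ℝ, 0 < ε →
    ∀ᶠ y in 𝓝 x, g x + (((inner ℝ v (y - x) : ℝ) - ε * ‖y - x‖ : ℝ) : EReal) ≤ g y}

/-- The limiting (Mordukhovich) subdifferential of `g` at `x`. -/
def limitingSubdiff (g : E → EReal) (x : E) : Set E :=
  {v | ∃ xs vs : ℕ → E,
    Tendsto xs atTop (𝓝 x) ∧
    Tendsto (fun n => g (xs n)) atTop (𝓝 (g x)) ∧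
    (∀ n, vs n ∈ frechetSubdiff g (xs n)) ∧
    Tendsto vs atTop (𝓝 v)}

/-- The projectional limiting subdifferential of `g` at `x` relative to `M`:
the orthogonal projection onto the tangent space `T x` of the limiting
subdifferential of `g + δ_M` at `x`. -/
def projSubdiff (g : E → ℝ) (M : Set E) (T : E → Submodule ℝ E) (x : E) : Set E :=
  (fun v => ((Submodule.orthogonalProjection (T x) v : T x) : E)) ''
    limitingSubdiff (fun y => (g y : EReal) + indicatorFun M y) x

/-- `M ⊆ E` is a smooth embedded submanifold with tangent spaces `T x`: around each
point of `M` there is a `C¹` local defining function with surjective derivative at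
that point, and on `M` the tangent space is the kernel of the derivative. -/
def IsSubmanifold (M : Set E) (T : E → Submodule ℝ E) : Prop :=
  ∀ x ∈ M, ∃ (m : ℕ) (U : Set E) (F : E → (Fin m → ℝ)),
    IsOpen U ∧ x ∈ U ∧ ContDiffOn ℝ 1 F U ∧
    Function.Surjective ⇑(fderiv ℝ F x) ∧
    M ∩ U = {y ∈ U | F y = 0} ∧
    ∀ y ∈ M ∩ U, T y = LinearMap.ker ((fderiv ℝ F y : E →L[ℝ] (Fin m → ℝ)) : E →ₗ[ℝ] (Fin m → ℝ))

/-- A retraction on the submanifold `M` with tangent spaces `T`: a `C²` map on the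
tangent bundle with values in `M` such that `R_x(0) = x` and `DR_x(0) = id`. -/
structure Retraction (M : Set E) (T : E → Submodule ℝ E) where
  R : E → E → E
  mem_target : ∀ x ∈ M, ∀ ξ ∈ T x, R x ξ ∈ M
  map_zero : ∀ x ∈ M, R x 0 = x
  smooth : ContDiffOn ℝ 2 (fun p : E × E => R p.1 p.2) {p : E × E | p.1 ∈ M ∧ p.2 ∈ T p.1}
  deriv_id : ∀ x ∈ M, ∀ ξ ∈ T x, HasDerivAt (fun t : ℝ => R x (t • ξ)) ξ 0

/-- Assumption A1: a local nonsmooth descent property of `φ` along the retraction,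
together with local boundedness of the projectional subdifferential on `M`. -/
def AssumptionA1 (M : Set E) (T : E → Submodule ℝ E) (Ret : Retraction M T) (φ : E → ℝ) : Prop :=
  (∀ z ∈ M, ∃ κ > (0:ℝ), ∃ r > (0:ℝ), ∃ O : Set E, IsOpen O ∧ z ∈ O ∧
    ∀ x ∈ M ∩ O, ∀ ξ ∈ T x, ‖ξ‖ ≤ r → ∀ w ∈ projSubdiff φ M T x,
      φ (Ret.R x ξ) - (φ x + (inner ℝ w ξ : ℝ)) ≤ κ * ‖ξ‖ ^ 2) ∧
  (∀ z ∈ M, ∃ ρ > (0:ℝ), ∃ c : ℝ, ∀ x ∈ M, ‖x - z‖ < ρ →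
    ∀ w ∈ projSubdiff φ M T x, ‖w‖ ≤ c)

/-- A run of the nonmonotone subgradient method on the manifold `M`:
subgradients `w k`, directions `d k`, stepsizes `τ k` obtained by backtracking
from initial trial stepsizes `τhat k` (with `j k` backtracking steps), iterates
`x k` and reference values `Rv k` updated by the mean-rule with weights `p k`. -/
structure AlgSeq (M : Set E) (T : E → Submodule ℝ E) (Ret : Retraction M T) (φ : E → ℝ)
    (σ β τmin τmax pmin a b : ℝ) where
  x : ℕ → E
  w : ℕ → E
  d : ℕ → E
  τhat : ℕ → ℝ
  j : ℕ → ℕ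
  τ : ℕ → ℝ
  p : ℕ → ℝ
  Rv : ℕ → ℝ
  x_mem : ∀ k, x k ∈ M
  w_mem : ∀ k, w k ∈ projSubdiff φ M T (x k)
  w_ne : ∀ k, w k ≠ 0
  d_mem : ∀ k, d k ∈ T (x k)
  d_ne : ∀ k, d k ≠ 0
  descent : ∀ k, (inner ℝ (w k) (d k) : ℝ) ≤ -a * ‖d k‖ ^ 2
  dir_bound : ∀ k, ‖w k‖ ≤ b * ‖d k‖
  τhat_mem : ∀ k, τhat k ∈ Set.Icc τmin τmax
  τ_def : ∀ k, τ k = β ^ (j k) * τhat k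
  j_least : ∀ k, IsLeast {i : ℕ |
      φ (Ret.R (x k) ((β ^ i * τhat k) • d k)) ≤
        Rv k + σ * (β ^ i * τhat k) * (inner ℝ (w k) (d k) : ℝ)} (j k)
  x_succ : ∀ k, x (k + 1) = Ret.R (x k) (τ k • d k)
  p_mem : ∀ k, p (k + 1) ∈ Set.Icc pmin 1
  R_zero : Rv 0 = φ (x 0)
  R_succ : ∀ k, Rv (k + 1) = (1 - p (k + 1)) * Rv k + p (k + 1) * φ (x (k + 1))

/-!
Each accepted step lies below the current reference value, because the Armijo-type
test adds the nonpositive term `σ τ_k ⟨w^k, d^k⟩` to `R_k`. The reference value is then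
a convex combination of `R_k` and `φ(x^{k+1}) ≤ R_k`, so it decreases and dominates the
function values; being bounded below by `inf φ`, it converges. Finally
`R_k - φ(x^{k+1}) = (R_k - R_{k+1}) / p_{k+1} ≤ (R_k - R_{k+1}) / p_min → 0`, which squeezes
`φ(x^{k+1})` between two sequences with the same limit.
-/

section MeanRule

def IsMeanRule (R f p : ℕ → ℝ) : Prop :=
  ∀ k, R (k + 1) = (1 - p (k + 1)) * R k + p (k + 1) * f (k + 1)

variable {R f p : ℕ → ℝ} {pmin : ℝ}

theorem meanRule_mem_Icc {y r q : ℝ} (hyr : y ≤ r) (hq : q ∈ Icc (0 : ℝ) 1) :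
    (1 - q) * r + q * y ∈ Icc y r :=
  convex_Icc y r (right_mem_Icc.2 hyr) (left_mem_Icc.2 hyr) (sub_nonneg.2 hq.2) hq.1
    (sub_add_cancel 1 q)

theorem antitone_of_meanRule (hp : ∀ k, p (k + 1) ∈ Icc (0 : ℝ) 1)
    (hR : IsMeanRule R f p)
    (hf : ∀ k, f (k + 1) ≤ R k) : Antitone R :=
  antitone_nat_of_succ_le fun k => hR k ▸ (meanRule_mem_Icc (hf k) (hp k)).2

theorem le_of_meanRule (h₀ : f 0 ≤ R 0) (hp : ∀ k, p (k + 1) ∈ Icc (0 : ℝ) 1)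
    (hR : IsMeanRule R f p)
    (hf : ∀ k, f (k + 1) ≤ R k) : ∀ k, f k ≤ R k
  | 0 => h₀
  | k + 1 => hR k ▸ (meanRule_mem_Icc (hf k) (hp k)).1

theorem sub_div_le_of_meanRule (hpmin : 0 < pmin) (hp : ∀ k, pmin ≤ p (k + 1))
    (hR : IsMeanRule R f p)
    (hf : ∀ k, f (k + 1) ≤ R k) (k : ℕ) :
    R k - (R k - R (k + 1)) / pmin ≤ f (k + 1) := by
  have hgap : R k - R (k + 1) = (R k - f (k + 1)) * p (k + 1) := by rw [hR k]; ring
  have hgap_le : R k - f (k + 1) ≤ (R k - R (k + 1)) / pmin := by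
    rw [le_div_iff₀ hpmin, hgap]
    exact mul_le_mul_of_nonneg_left (hp k) (sub_nonneg.2 (hf k))
  linarith

theorem tendsto_of_meanRule {L : ℝ} (hpmin : 0 < pmin) (hp : ∀ k, pmin ≤ p (k + 1))
    (hR : IsMeanRule R f p)
    (hf : ∀ k, f (k + 1) ≤ R k) (hRL : Tendsto R atTop (𝓝 L)) :
    Tendsto f atTop (𝓝 L) := by
  have hRL' : Tendsto (fun k => R (k + 1)) atTop (𝓝 L) := hRL.comp (tendsto_add_atTop_nat 1)
  have hlower : Tendsto (fun k => R k - (R k - R (k + 1)) / pmin) atTop (𝓝 L) := by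
    simpa using hRL.sub ((hRL.sub hRL').div_const pmin)
  exact (tendsto_add_atTop_iff_nat 1).1 <|
    tendsto_of_tendsto_of_tendsto_of_le_of_le hlower hRL
      (sub_div_le_of_meanRule hpmin hp hR hf) hf

end MeanRule

namespace AlgSeq

variable {M : Set E} {T : E → Submodule ℝ E} {Ret : Retraction M T} {φ : E → ℝ}
  {σ β τmin τmax pmin a b : ℝ}

theorem φ_x_succ_le_Rv (A : AlgSeq M T Ret φ σ β τmin τmax pmin a b)
    (hσ : 0 ≤ σ) (hβ : 0 ≤ β) (hτmin : 0 ≤ τmin) (ha : 0 ≤ a) (k : ℕ) :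
    φ (A.x (k + 1)) ≤ A.Rv k := by
  have hstep : 0 ≤ β ^ A.j k * A.τhat k :=
    mul_nonneg (pow_nonneg hβ _) (hτmin.trans (A.τhat_mem k).1)
  have hinner : (inner ℝ (A.w k) (A.d k) : ℝ) ≤ 0 :=
    (A.descent k).trans (mul_nonpos_of_nonpos_of_nonneg (neg_nonpos.2 ha) (sq_nonneg _))
  rw [A.x_succ k, A.τ_def k]
  exact (A.j_least k).1.trans
    (add_le_of_nonpos_right (mul_nonpos_of_nonneg_of_nonpos (mul_nonneg hσ hstep) hinner))

end AlgSeq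

theorem stmt6_general
    (M : Set E) (T : E → Submodule ℝ E) (Ret : Retraction M T) (φ : E → ℝ)
    (σ β τmin τmax pmin a b : ℝ)
    (hσ : σ ∈ Set.Ioo (0:ℝ) 1) (hβ : β ∈ Set.Ioo (0:ℝ) 1)
    (hτmin : 0 < τmin)
    (hpmin : pmin ∈ Set.Ioc (0:ℝ) 1) (ha : 0 < a)
    (hφbdd : BddBelow (φ '' M))
    (A : AlgSeq M T Ret φ σ β τmin τmax pmin a b)
    :
    Antitone A.Rv ∧
    (∀ k, φ (A.x k) ≤ A.Rv k ∧ A.Rv k ≤ A.Rv 0) ∧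
    A.Rv 0 = φ (A.x 0) ∧
    ∃ φstar : ℝ, Tendsto A.Rv atTop (𝓝 φstar) ∧
      Tendsto (fun k => φ (A.x k)) atTop (𝓝 φstar) := by
  have hmean : IsMeanRule A.Rv (fun k => φ (A.x k)) A.p := A.R_succ
  have hdesc : ∀ k, φ (A.x (k + 1)) ≤ A.Rv k :=
    A.φ_x_succ_le_Rv hσ.1.le hβ.1.le hτmin.le ha.le
  have hp : ∀ k, A.p (k + 1) ∈ Icc (0 : ℝ) 1 :=
    fun k => ⟨hpmin.1.le.trans (A.p_mem k).1, (A.p_mem k).2⟩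
  have hanti : Antitone A.Rv := antitone_of_meanRule hp hmean hdesc
  have hle : ∀ k, φ (A.x k) ≤ A.Rv k := le_of_meanRule A.R_zero.ge hp hmean hdesc
  obtain ⟨c, hc⟩ := hφbdd
  have hbdd : BddBelow (range A.Rv) :=
    ⟨c, forall_mem_range.2 fun k => (hc ⟨A.x k, A.x_mem k, rfl⟩).trans (hle k)⟩
  have hlim := tendsto_atTop_ciInf hanti hbdd
  exact ⟨hanti, fun k => ⟨hle k, hanti (Nat.zero_le k)⟩, A.R_zero, _, hlim,
    tendsto_of_meanRule hpmin.1 (fun k => (A.p_mem k).1) hmean hdesc hlim⟩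

/-- The reference values decrease monotonically, bound the function values, and both
sequences converge to one and the same finite limit. -/
theorem stmt6
    (M : Set E) (T : E → Submodule ℝ E) (Ret : Retraction M T) (φ : E → ℝ)
    (σ β τmin τmax pmin a b : ℝ)
    (hσ : σ ∈ Set.Ioo (0:ℝ) 1) (hβ : β ∈ Set.Ioo (0:ℝ) 1)
    (hτmin : 0 < τmin) (hττ : τmin ≤ τmax)
    (hpmin : pmin ∈ Set.Ioc (0:ℝ) 1) (ha : 0 < a) (hb : 0 < b)
    (hM : IsSubmanifold M T)
    (hφcont : ContinuousOn φ M)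
    (hφbdd : BddBelow (φ '' M))
    (hA1 : AssumptionA1 M T Ret φ)
    (A : AlgSeq M T Ret φ σ β τmin τmax pmin a b)
    :
    Antitone A.Rv ∧
    (∀ k, φ (A.x k) ≤ A.Rv k ∧ A.Rv k ≤ A.Rv 0) ∧
    A.Rv 0 = φ (A.x 0) ∧
    ∃ φstar : ℝ, Tendsto A.Rv atTop (𝓝 φstar) ∧
      Tendsto (fun k => φ (A.x k)) atTop (𝓝 φstar) :=
  stmt6_general M T Ret φ σ β τmin τmax pmin a b hσ hβ hτmin hpmin ha hφbdd A
end
end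

section
/- Under the standing hypotheses and the KL-setup data, suppose the entire sequence {x^k} converges to x* and Φ := φ + δ_M satisfies the KL property at x* with desingularization function χ(t) = c t^θ, c > 0, θ ∈ (0,1). With e := (1/α)·√(p_min σ a / τ_max) and ω := (e τ_C / (2 c θ b))², for all sufficiently large k it holds that φ(x^k) − φ(x*) ≤ (1/ω)^{1/(2(1−θ))} · (R_k − R_{k+1})^{1/(2(1−θ))}. -/
open Set Filter Topology

noncomputable section

variable {E : Type*} [NormedAddCommGroup E] [InnerProductSpace ℝ E] [FiniteDimensional ℝ E]

/-- The Kurdyka–Łojasiewicz property of `g` at `xstar` with constant `η`,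
neighborhood `U`, desingularization function `χ` and its derivative `χ'`. -/
def KLProperty (g : E → EReal) (xstar : E) (η : ℝ) (U : Set E) (χ χ' : ℝ → ℝ) : Prop :=
  0 < η ∧ U ∈ 𝓝 xstar ∧
  ContinuousOn χ (Set.Icc 0 η) ∧ ConcaveOn ℝ (Set.Icc 0 η) χ ∧ χ 0 = 0 ∧
  (∀ t ∈ Set.Icc (0:ℝ) η, 0 ≤ χ t) ∧
  (∀ t ∈ Set.Ioo (0:ℝ) η, HasDerivAt χ (χ' t) t) ∧
  ContinuousOn χ' (Set.Ioo 0 η) ∧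
  (∀ t ∈ Set.Ioo (0:ℝ) η, 0 < χ' t) ∧
  ∀ y, g xstar < g y → g y < g xstar + (η : EReal) → y ∈ U →
    1 ≤ χ' ((g y).toReal - (g xstar).toReal) * Metric.infDist 0 (limitingSubdiff g y)

/-!
Once `x^k` stays in `C`, the stepsizes are at least `τ_C` and the mean rule gives
`R_k - R_{k+1} ≥ p_min σ a τ_C ‖d^k‖²`. The direction `w^k` is the tangential part of a limiting
subgradient `v` of `φ + δ_M`, and it is itself a limiting subgradient: a normal vector to `M` is
`o(‖y - x‖)` against `y - x` for `y ∈ M`, so subtracting it preserves Fréchet subgradients, and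
the normal part of `v` is a limit of normals at the approximating points. The KL inequality
then bounds `(φ(x^k) - φ(x*))^{1-θ} ≤ c θ ‖w^k‖ ≤ c θ b ‖d^k‖`; squaring and comparing with
the decrease, using `τ_C ≤ τ_max` and `α ≥ 1` (as `DR_x(0) = id`), gives the estimate.
-/

section

open Asymptotics
open scoped RealInnerProductSpace InnerProduct

variable {V : Type*} [NormedAddCommGroup V] [InnerProductSpace ℝ V] {M : Set V}
  {T : V → Submodule ℝ V}

theorem mem_limitingSubdiff_of_eventually {g : V → EReal} {x v : V} {xs vs : ℕ → V}
    (hxs : Tendsto xs atTop (𝓝 x)) (hgxs : Tendsto (fun k => g (xs k)) atTop (𝓝 (g x)))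
    (hvs : Tendsto vs atTop (𝓝 v)) (hmem : ∀ᶠ k in atTop, vs k ∈ frechetSubdiff g (xs k)) :
    v ∈ limitingSubdiff g x := by
  obtain ⟨N, hN⟩ := eventually_atTop.mp hmem
  have hshift : Tendsto (· + N) atTop atTop := tendsto_add_atTop_nat N
  exact ⟨fun k => xs (k + N), fun k => vs (k + N), hxs.comp hshift, hgxs.comp hshift,
    fun k => hN (k + N) (Nat.le_add_left N k), hvs.comp hshift⟩

theorem sub_mem_frechetSubdiff_of_isLittleO {g : V → EReal} (hdom : ∀ y ∉ M, g y = ⊤)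
    {x v n : V} (hn : (fun y => ⟪n, y - x⟫) =o[𝓝[M] x] (fun y => y - x))
    (hv : v ∈ frechetSubdiff g x) : v - n ∈ frechetSubdiff g x := by
  intro ε hε
  have hnε := eventually_nhdsWithin_iff.mp (hn.def (half_pos hε))
  filter_upwards [hv (ε / 2) (half_pos hε), hnε] with y hvy hny
  by_cases hyM : y ∈ M
  · refine le_trans (add_le_add_right (EReal.coe_le_coe_iff.mpr ?_) _) hvy
    have := (abs_le.mp (hny hyM)).1
    rw [inner_sub_left]
    linarith
  · rw [hdom y hyM]
    exact le_top

theorem inner_eq_inner_rightInverse_apply {F : Type*} [NormedAddCommGroup F] [NormedSpace ℝ F]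
    {A : V →L[ℝ] F} {S : F →L[ℝ] V} (hAS : A ∘L S = ContinuousLinearMap.id ℝ F) {n : V}
    (hn : n ∈ (LinearMap.ker (A : V →ₗ[ℝ] F))ᗮ) (u : V) : ⟪n, u⟫ = ⟪n, S (A u)⟫ := by
  have hker : u - S (A u) ∈ LinearMap.ker (A : V →ₗ[ℝ] F) := by
    simp [LinearMap.mem_ker, ← ContinuousLinearMap.comp_apply A S, hAS]
  rw [← sub_eq_zero, ← inner_sub_right, Submodule.inner_left_of_mem_orthogonal hker hn]

theorem ContinuousLinearMap.adjoint_comp_apply_mem_orthogonal_ker [CompleteSpace V] {F : Type*}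
    [NormedAddCommGroup F] [NormedSpace ℝ F] (A : V →L[ℝ] F) (S : F →L[ℝ] V) (n : V) :
    ((S ∘L A)†) n ∈ (LinearMap.ker (A : V →ₗ[ℝ] F))ᗮ := by
  rw [Submodule.mem_orthogonal]
  intro u hu
  rw [ContinuousLinearMap.adjoint_inner_right, ContinuousLinearMap.comp_apply,
    show A u = 0 from hu, map_zero, inner_zero_left]

theorem ContinuousLinearMap.adjoint_comp_rightInverse_apply [CompleteSpace V] {F : Type*}
    [NormedAddCommGroup F] [NormedSpace ℝ F] {A : V →L[ℝ] F} {S : F →L[ℝ] V}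
    (hAS : A ∘L S = ContinuousLinearMap.id ℝ F) {n : V}
    (hn : n ∈ (LinearMap.ker (A : V →ₗ[ℝ] F))ᗮ) : ((S ∘L A)†) n = n :=
  ext_inner_left ℝ fun u => by
    rw [ContinuousLinearMap.adjoint_inner_right, real_inner_comm, real_inner_comm n,
      ContinuousLinearMap.comp_apply]
    exact (inner_eq_inner_rightInverse_apply hAS hn u).symm

theorem IsSubmanifold.isLittleO_inner_of_mem_orthogonal (hM : IsSubmanifold M T) {x n : V}
    (hx : x ∈ M) (hn : n ∈ (T x)ᗮ) : (fun y => ⟪n, y - x⟫) =o[𝓝[M] x] (fun y => y - x) := by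
  obtain ⟨m, U, F, hU, hxU, hF, hsurj, hMU, hT⟩ := hM x hx
  obtain ⟨S, hS⟩ := (fderiv ℝ F x).exists_rightInverse_of_surjective
    (LinearMap.range_eq_top.mpr hsurj)
  rw [hT x ⟨hx, hxU⟩] at hn
  have hDF : HasFDerivAt F (fderiv ℝ F x) x :=
    ((hF.differentiableOn one_ne_zero).differentiableAt (hU.mem_nhds hxU)).hasFDerivAt
  have hzero : ∀ y ∈ M ∩ U, F y = 0 := fun y hy => (hMU ▸ hy : y ∈ {y ∈ U | F y = 0}).2
  -- `F` vanishes on `M ∩ U`, so there the linear term is minus the Taylor remainder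
  have hlin : (fun y => fderiv ℝ F x (y - x)) =o[𝓝[M] x] (fun y => y - x) := by
    refine isLittleO_neg_left.mp ((hDF.isLittleO.mono nhdsWithin_le_nhds).congr' ?_
      EventuallyEq.rfl)
    filter_upwards [inter_mem_nhdsWithin M (hU.mem_nhds hxU)] with y hy
    rw [hzero y hy, hzero x ⟨hx, hxU⟩, sub_zero, zero_sub]
  have hfactor : (fun y => ⟪n, y - x⟫) = fun y => (innerSL ℝ n ∘L S) (fderiv ℝ F x (y - x)) :=
    funext fun y => inner_eq_inner_rightInverse_apply hS hn (y - x)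
  rw [hfactor]
  exact ((innerSL ℝ n ∘L S).isBigO_comp _ _).trans_isLittleO hlin

theorem IsSubmanifold.sub_mem_limitingSubdiff [CompleteSpace V] (hM : IsSubmanifold M T)
    {g : V → EReal} (hdom : ∀ y ∉ M, g y = ⊤) {x v n : V} (hgx : g x ≠ ⊤) (hn : n ∈ (T x)ᗮ)
    (hv : v ∈ limitingSubdiff g x) : v - n ∈ limitingSubdiff g x := by
  obtain ⟨xs, vs, hxs, hgxs, hvs_mem, hvs⟩ := hv
  have hxM : x ∈ M := by_contra fun h => hgx (hdom x h)
  obtain ⟨m, U, F, hU, hxU, hF, hsurj, hMU, hT⟩ := hM x hxM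
  obtain ⟨S, hS⟩ := (fderiv ℝ F x).exists_rightInverse_of_surjective
    (LinearMap.range_eq_top.mpr hsurj)
  rw [hT x ⟨hxM, hxU⟩] at hn
  have hDF : ContinuousAt (fderiv ℝ F) x :=
    (hF.continuousOn_fderiv_of_isOpen hU le_rfl).continuousAt (hU.mem_nhds hxU)
  -- `(S ∘L DF y)† n` is normal to `M` at `y ∈ M ∩ U` and equals `n` at `y = x`
  have hns : Tendsto (fun k => ((S ∘L fderiv ℝ F (xs k))†) n) atTop (𝓝 n) := by
    have hcont : ContinuousAt (fun y => ((S ∘L fderiv ℝ F y)†) n) x :=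
      ((ContinuousLinearMap.adjoint (𝕜 := ℝ) (E := V) (F := V)).continuous.continuousAt.comp
        (continuousAt_const.clm_comp hDF)).clm_apply continuousAt_const
    have := hcont.tendsto.comp hxs
    rwa [ContinuousLinearMap.adjoint_comp_rightInverse_apply hS hn] at this
  have hxsM : ∀ᶠ k in atTop, xs k ∈ M ∩ U := by
    filter_upwards [hgxs.eventually (gt_mem_nhds (lt_top_iff_ne_top.mpr hgx)),
      hxs.eventually (hU.mem_nhds hxU)] with k hgk hk
    exact ⟨by_contra fun h => hgk.ne (hdom _ h), hk⟩
  refine mem_limitingSubdiff_of_eventually hxs hgxs (hvs.sub hns) ?_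
  filter_upwards [hxsM] with k hk
  refine sub_mem_frechetSubdiff_of_isLittleO hdom
    (hM.isLittleO_inner_of_mem_orthogonal hk.1 ?_) (hvs_mem k)
  rw [hT _ hk]
  exact ContinuousLinearMap.adjoint_comp_apply_mem_orthogonal_ker _ _ _

theorem KLProperty.rpow_le_mul_norm {g : V → EReal} {x y w : V} {η c θ : ℝ} {U : Set V}
    {χ' : ℝ → ℝ} (hKL : KLProperty g x η U (fun t => c * t ^ θ) χ') {s₀ s : ℝ}
    (hgx : g x = s₀) (hgy : g y = s) (hlt : s₀ < s) (hη : s < s₀ + η) (hy : y ∈ U)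
    (hw : w ∈ limitingSubdiff g y) : (s - s₀) ^ (1 - θ) ≤ c * θ * ‖w‖ := by
  obtain ⟨-, -, -, -, -, -, hderiv, -, hpos, hineq⟩ := hKL
  set t := s - s₀
  have ht : t ∈ Ioo 0 η := ⟨sub_pos.mpr hlt, by linarith⟩
  have hχ' : χ' t = c * (θ * t ^ (θ - 1)) :=
    (hderiv t ht).unique ((Real.hasDerivAt_rpow_const (Or.inl ht.1.ne')).const_mul c)
  have hKLy : 1 ≤ χ' t * ‖w‖ := by
    have := hineq y (by rw [hgx, hgy]; exact_mod_cast hlt) (by rw [hgx, hgy]; exact_mod_cast hη) hy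
    rw [hgx, hgy, EReal.toReal_coe, EReal.toReal_coe] at this
    refine this.trans (mul_le_mul_of_nonneg_left ?_ (hpos t ht).le)
    simpa using Metric.infDist_le_dist_of_mem hw (x := 0)
  have hprod : t ^ (1 - θ) * t ^ (θ - 1) = 1 := by
    rw [← Real.rpow_add ht.1]
    simp
  calc t ^ (1 - θ) = t ^ (1 - θ) * 1 := (mul_one _).symm
    _ ≤ t ^ (1 - θ) * (χ' t * ‖w‖) := mul_le_mul_of_nonneg_left hKLy (by positivity)
    _ = c * θ * ‖w‖ := by rw [hχ']; linear_combination (c * θ * ‖w‖) * hprod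

theorem Retraction.one_le_of_norm_sub_le (Ret : Retraction M T) {x ξ : V} (hx : x ∈ M)
    (hξ : ξ ∈ T x) (hξ0 : ξ ≠ 0) {α r : ℝ} (hα : 0 ≤ α) (hr : 0 < r)
    (h : ∀ ζ ∈ T x, ‖ζ‖ ≤ r → ‖Ret.R x ζ - x‖ ≤ α * ‖ζ‖) :
    1 ≤ α := by
  have hsmall : ∀ᶠ t : ℝ in 𝓝 0, ‖t • ξ‖ < r := by
    have : Tendsto (fun t : ℝ => ‖t • ξ‖) (𝓝 0) (𝓝 0) := by
      simpa using ((continuous_id.smul continuous_const).norm.tendsto 0 :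
        Tendsto (fun t : ℝ => ‖t • ξ‖) (𝓝 0) (𝓝 ‖(0 : ℝ) • ξ‖))
    exact this.eventually (gt_mem_nhds hr)
  have hnorm : ‖ξ‖ ≤ α * ‖ξ‖ := by
    refine (Ret.deriv_id x hx ξ hξ).le_of_lip' (by positivity) ?_
    filter_upwards [hsmall] with t ht
    rw [zero_smul, Ret.map_zero x hx, sub_zero, mul_assoc, mul_comm ‖ξ‖, ← norm_smul]
    exact h _ (Submodule.smul_mem _ t hξ) ht.le
  exact (le_mul_iff_one_le_left (norm_pos_iff.mpr hξ0)).mp hnorm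

end

theorem projSubdiff_subset_limitingSubdiff {M : Set E} {T : E → Submodule ℝ E}
    (hM : IsSubmanifold M T) (φ : E → ℝ) {x : E} (hx : x ∈ M) :
    projSubdiff φ M T x ⊆ limitingSubdiff (fun y => (φ y : EReal) + indicatorFun M y) x := by
  rintro _ ⟨v, hv, rfl⟩
  have hdom : ∀ y ∉ M, (φ y : EReal) + indicatorFun M y = ⊤ := fun y hy => by
    simp [indicatorFun, hy]
  simpa using hM.sub_mem_limitingSubdiff hdom (by simp [indicatorFun, hx])
    (Submodule.sub_starProjection_mem_orthogonal v) hv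

theorem le_mul_rpow_of_mul_rpow_le {ω p t D : ℝ} (hω : 0 < ω) (hp : 0 < p) (ht : 0 ≤ t)
    (h : ω * t ^ p ≤ D) : t ≤ (1 / ω) ^ (1 / p) * D ^ (1 / p) := by
  have hD : 0 ≤ D := (by positivity : 0 ≤ ω * t ^ p).trans h
  have htp : t ^ p ≤ 1 / ω * D := by rwa [one_div_mul_eq_div, le_div_iff₀' hω]
  calc t = (t ^ p) ^ (1 / p) := by rw [one_div, Real.rpow_rpow_inv ht hp.ne']
    _ ≤ (1 / ω * D) ^ (1 / p) := Real.rpow_le_rpow (by positivity) htp (by positivity)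
    _ = (1 / ω) ^ (1 / p) * D ^ (1 / p) := Real.mul_rpow (by positivity) hD

theorem sq_mul_sq_le_mul_mul_sq {α s τC τmax c θ b d : ℝ} (hα : 1 ≤ α) (hs : 0 ≤ s) (hτC : 0 < τC)
    (hτ : τC ≤ τmax) (hc : c ≠ 0) (hθ : θ ≠ 0) (hb : b ≠ 0) :
    ((1 / α) * √(s / τmax) * τC / (2 * c * θ * b)) ^ 2 * (c * θ * b * d) ^ 2 ≤
      s * (τC * d ^ 2) := by
  have hτmax : 0 < τmax := hτC.trans_le hτ
  have hα0 : 0 < α := one_pos.trans_le hα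
  have heq : ((1 / α) * √(s / τmax) * τC / (2 * c * θ * b)) ^ 2 * (c * θ * b * d) ^ 2 =
      s * τC ^ 2 * d ^ 2 / (τmax * (4 * α ^ 2)) := by
    rw [div_pow, mul_pow, mul_pow, Real.sq_sqrt (by positivity)]
    field_simp
    ring
  rw [heq, div_le_iff₀ (by positivity)]
  have : τC ≤ τmax * (4 * α ^ 2) := by
    nlinarith [mul_le_mul_of_nonneg_left (show 1 ≤ 4 * α ^ 2 by nlinarith) hτmax.le]
  calc s * τC ^ 2 * d ^ 2 = (s * τC * d ^ 2) * τC := by ring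
    _ ≤ (s * τC * d ^ 2) * (τmax * (4 * α ^ 2)) := by gcongr
    _ = s * (τC * d ^ 2) * (τmax * (4 * α ^ 2)) := by ring

namespace AlgSeq

open scoped RealInnerProductSpace

variable {M : Set E} {T : E → Submodule ℝ E} {Ret : Retraction M T} {φ : E → ℝ}
  {σ β τmin τmax pmin a b : ℝ} (A : AlgSeq M T Ret φ σ β τmin τmax pmin a b)

theorem φ_x_succ_le (k : ℕ) : φ (A.x (k + 1)) ≤ A.Rv k + σ * A.τ k * ⟪A.w k, A.d k⟫ := by
  have := (A.j_least k).1
  rwa [Set.mem_ofPred_eq, ← A.τ_def, ← A.x_succ] at this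

theorem mul_sq_norm_d_le_Rv_sub (hσ : 0 ≤ σ) (ha : 0 ≤ a) (hpmin : 0 ≤ pmin) {k : ℕ}
    (hτ : 0 ≤ A.τ k) : pmin * σ * a * (A.τ k * ‖A.d k‖ ^ 2) ≤ A.Rv k - A.Rv (k + 1) := by
  have hdecr : φ (A.x (k + 1)) - A.Rv k ≤ -(σ * a * (A.τ k * ‖A.d k‖ ^ 2)) := by
    have := mul_le_mul_of_nonneg_left (A.descent k) (mul_nonneg hσ hτ)
    linarith [A.φ_x_succ_le k]
  have hp := A.p_mem k
  have hX : 0 ≤ σ * a * (A.τ k * ‖A.d k‖ ^ 2) := by positivity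
  rw [A.R_succ]
  nlinarith [mul_le_mul_of_nonneg_left hdecr (hpmin.trans hp.1),
    mul_nonneg (sub_nonneg.mpr hp.1) hX]

theorem τ_le_τmax (hβ0 : 0 ≤ β) (hβ1 : β ≤ 1) (hτmin : 0 ≤ τmin) (k : ℕ) : A.τ k ≤ τmax := by
  obtain ⟨hlo, hhi⟩ := A.τhat_mem k
  rw [A.τ_def]
  calc β ^ A.j k * A.τhat k ≤ 1 * A.τhat k :=
        mul_le_mul_of_nonneg_right (pow_le_one₀ hβ0 hβ1) (hτmin.trans hlo)
    _ ≤ τmax := by rwa [one_mul]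

theorem rpow_sub_le_mul_norm_d (hM : IsSubmanifold M T) {xstar : E} (hxstar : xstar ∈ M)
    {η c θ : ℝ} {U : Set E} {χ' : ℝ → ℝ}
    (hKL : KLProperty (fun y => (φ y : EReal) + indicatorFun M y) xstar η U
      (fun t => c * t ^ θ) χ') (hc : 0 ≤ c) (hθ : 0 ≤ θ) {k : ℕ} (hkU : A.x k ∈ U)
    (hlt : φ xstar < φ (A.x k)) (hη : φ (A.x k) < φ xstar + η) :
    (φ (A.x k) - φ xstar) ^ (1 - θ) ≤ c * θ * b * ‖A.d k‖ := by
  refine (hKL.rpow_le_mul_norm (by simp [indicatorFun, hxstar])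
    (by simp [indicatorFun, A.x_mem k]) hlt hη hkU
    (projSubdiff_subset_limitingSubdiff hM φ (A.x_mem k) (A.w_mem k))).trans ?_
  rw [mul_assoc _ b]
  exact mul_le_mul_of_nonneg_left (A.dir_bound k) (by positivity)

theorem φ_sub_le_of_KL (hM : IsSubmanifold M T) {xstar : E} (hxstar : xstar ∈ M)
    {η c θ : ℝ} {U : Set E} {χ' : ℝ → ℝ}
    (hKL : KLProperty (fun y => (φ y : EReal) + indicatorFun M y) xstar η U
      (fun t => c * t ^ θ) χ')
    (hσ : 0 < σ) (hpmin : 0 < pmin) (ha : 0 < a) (hb : 0 < b) (hc : 0 < c)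
    (hθ : θ ∈ Ioo 0 1) {α τC : ℝ} (hα : 1 ≤ α) (hτC : 0 < τC) (hτC_le : τC ≤ τmax) {k : ℕ}
    (hkτ : τC ≤ A.τ k) (hkU : A.x k ∈ U) (hkη : φ (A.x k) < φ xstar + η) :
    φ (A.x k) - φ xstar ≤
      (1 / (((1 / α) * Real.sqrt (pmin * σ * a / τmax) * τC / (2 * c * θ * b)) ^ 2))
          ^ (1 / (2 * (1 - θ))) *
        (A.Rv k - A.Rv (k + 1)) ^ (1 / (2 * (1 - θ))) := by
  obtain ⟨hθ0, hθ1⟩ := hθ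
  have hτmax : 0 < τmax := hτC.trans_le hτC_le
  have hdecr : pmin * σ * a * (τC * ‖A.d k‖ ^ 2) ≤ A.Rv k - A.Rv (k + 1) :=
    (mul_le_mul_of_nonneg_left (by gcongr) (by positivity)).trans
      (A.mul_sq_norm_d_le_Rv_sub hσ.le ha.le hpmin.le (hτC.trans_le hkτ).le)
  rcases le_or_gt (φ (A.x k)) (φ xstar) with hle | hlt
  · exact (sub_nonpos.mpr hle).trans (mul_nonneg (Real.rpow_nonneg (by positivity) _)
      (Real.rpow_nonneg ((by positivity : (0 : ℝ) ≤ _).trans hdecr) _))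
  refine le_mul_rpow_of_mul_rpow_le (by positivity) (by linarith) (sub_nonneg.mpr hlt.le) ?_
  rw [mul_comm 2 (1 - θ), Real.rpow_mul (sub_nonneg.mpr hlt.le), Real.rpow_two]
  calc _ ≤ _ * (c * θ * b * ‖A.d k‖) ^ 2 := by
        gcongr
        exact A.rpow_sub_le_mul_norm_d hM hxstar hKL hc.le hθ0.le hkU hlt hkη
    _ ≤ pmin * σ * a * (τC * ‖A.d k‖ ^ 2) :=
        sq_mul_sq_le_mul_mul_sq hα (by positivity) hτC hτC_le hc.ne' hθ0.ne' hb.ne'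
    _ ≤ _ := hdecr

end AlgSeq

theorem stmt18_general
    (M : Set E) (T : E → Submodule ℝ E) (Ret : Retraction M T) (φ : E → ℝ)
    (σ β τmin τmax pmin a b : ℝ)
    (hσ : σ ∈ Set.Ioo (0:ℝ) 1) (hβ : β ∈ Set.Ioo (0:ℝ) 1)
    (hτmin : 0 < τmin)
    (hpmin : pmin ∈ Set.Ioc (0:ℝ) 1) (ha : 0 < a) (hb : 0 < b)
    (hM : IsSubmanifold M T)
    (hφcont : ContinuousOn φ M)
    (A : AlgSeq M T Ret φ σ β τmin τmax pmin a b)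
    (xstar : E)
    (C : Set E) (hCM : C ⊆ M) (hCcomp : IsCompact C)
    (hCint : ∃ O : Set E, IsOpen O ∧ xstar ∈ O ∧ M ∩ O ⊆ C)
    (τC : ℝ) (hτC : 0 < τC) (hτCk : ∀ k, A.x k ∈ C → τC ≤ A.τ k)
    (α r : ℝ) (hα : 0 < α) (hr : 0 < r)
    (hretr : ∀ x ∈ C, ∀ ξ ∈ T x, ‖ξ‖ ≤ r → ‖Ret.R x ξ - x‖ ≤ α * ‖ξ‖)
    (hconv : Tendsto A.x atTop (𝓝 xstar))
    (c θ : ℝ) (hc : 0 < c) (hθ : θ ∈ Set.Ioo (0 : ℝ) 1)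
    (hKL : ∃ (η : ℝ) (U : Set E) (χ' : ℝ → ℝ),
      KLProperty (fun y => (φ y : EReal) + indicatorFun M y) xstar η U
        (fun t => c * t ^ θ) χ') :
    ∃ N : ℕ, ∀ k ≥ N,
      φ (A.x k) - φ xstar ≤
        (1 / (((1 / α) * Real.sqrt (pmin * σ * a / τmax) * τC / (2 * c * θ * b)) ^ 2))
            ^ (1 / (2 * (1 - θ))) *
          (A.Rv k - A.Rv (k + 1)) ^ (1 / (2 * (1 - θ))) := by
  obtain ⟨η, U, χ', hKL⟩ := hKL
  obtain ⟨O, hO, hxO, hMO⟩ := hCint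
  have hevC : ∀ᶠ k in atTop, A.x k ∈ C := by
    filter_upwards [hconv.eventually (hO.mem_nhds hxO)] with k hk using hMO ⟨A.x_mem k, hk⟩
  have hxstar : xstar ∈ M := hCM (hCcomp.isClosed.mem_of_tendsto hconv hevC)
  obtain ⟨k₀, hk₀⟩ := hevC.exists
  have hα1 : 1 ≤ α := Ret.one_le_of_norm_sub_le (A.x_mem k₀) (A.d_mem k₀) (A.d_ne k₀) hα.le hr
    (hretr _ hk₀)
  have hτC_le : τC ≤ τmax := (hτCk k₀ hk₀).trans (A.τ_le_τmax hβ.1.le hβ.2.le hτmin.le k₀)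
  have hφ : Tendsto (fun k => φ (A.x k)) atTop (𝓝 (φ xstar)) :=
    (hφcont xstar hxstar).tendsto.comp (tendsto_nhdsWithin_iff.mpr ⟨hconv, .of_forall A.x_mem⟩)
  obtain ⟨N, hN⟩ := eventually_atTop.mp (hevC.and ((hconv.eventually hKL.2.1).and
    (hφ.eventually (gt_mem_nhds (lt_add_of_pos_right _ hKL.1)))))
  refine ⟨N, fun k hk => ?_⟩
  obtain ⟨hkC, hkU, hkη⟩ := hN k hk
  exact A.φ_sub_le_of_KL hM hxstar hKL hσ.1 hpmin.1 ha hb hc hθ hα1 hτC hτC_le (hτCk k hkC)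
    hkU hkη

/-- The key estimate `φ(x^k) - φ(x*) ≤ (1/ω)^{1/(2(1-θ))} (R_k - R_{k+1})^{1/(2(1-θ))}`
with `e := (1/α)√(pmin σ a / τmax)` and `ω := (e τ_C / (2 c θ b))²`. -/
theorem stmt18
    (M : Set E) (T : E → Submodule ℝ E) (Ret : Retraction M T) (φ : E → ℝ)
    (σ β τmin τmax pmin a b : ℝ)
    (hσ : σ ∈ Set.Ioo (0:ℝ) 1) (hβ : β ∈ Set.Ioo (0:ℝ) 1)
    (hτmin : 0 < τmin) (hττ : τmin ≤ τmax)
    (hpmin : pmin ∈ Set.Ioc (0:ℝ) 1) (ha : 0 < a) (hb : 0 < b)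
    (hM : IsSubmanifold M T)
    (hφcont : ContinuousOn φ M)
    (hφbdd : BddBelow (φ '' M))
    (hA1 : AssumptionA1 M T Ret φ)
    (A : AlgSeq M T Ret φ σ β τmin τmax pmin a b)
    (xstar : E) (ψ : ℕ → ℕ) (hψ : StrictMono ψ)
    (hacc : Tendsto (fun n => A.x (ψ n)) atTop (𝓝 xstar))
    (C : Set E) (hCM : C ⊆ M) (hCcomp : IsCompact C)
    (hCint : ∃ O : Set E, IsOpen O ∧ xstar ∈ O ∧ M ∩ O ⊆ C)
    (hCφ : ∀ y ∈ C, φ y ≤ A.Rv 0)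
    (τC : ℝ) (hτC : 0 < τC) (hτCk : ∀ k, A.x k ∈ C → τC ≤ A.τ k)
    (α r : ℝ) (hα : 0 < α) (hr : 0 < r)
    (hretr : ∀ x ∈ C, ∀ ξ ∈ T x, ‖ξ‖ ≤ r → ‖Ret.R x ξ - x‖ ≤ α * ‖ξ‖)
    (hconv : Tendsto A.x atTop (𝓝 xstar))
    (c θ : ℝ) (hc : 0 < c) (hθ : θ ∈ Set.Ioo (0 : ℝ) 1)
    (hKL : ∃ (η : ℝ) (U : Set E) (χ' : ℝ → ℝ),
      KLProperty (fun y => (φ y : EReal) + indicatorFun M y) xstar η U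
        (fun t => c * t ^ θ) χ') :
    ∃ N : ℕ, ∀ k ≥ N,
      φ (A.x k) - φ xstar ≤
        (1 / (((1 / α) * Real.sqrt (pmin * σ * a / τmax) * τC / (2 * c * θ * b)) ^ 2))
            ^ (1 / (2 * (1 - θ))) *
          (A.Rv k - A.Rv (k + 1)) ^ (1 / (2 * (1 - θ))) :=
  stmt18_general M T Ret φ σ β τmin τmax pmin a b hσ hβ hτmin hpmin ha hb hM hφcont A xstar C hCM
    hCcomp hCint τC hτC hτCk α r hα hr hretr hconv c θ hc hθ hKL

end
end
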